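/- Let u be a continuous solution of the integral equation u(t) = α₁ + χ₁ t + (α₂ − α₁ − χ₁T)(t/T)^p + (1/Γ(p))[∫₀^t (t-s)^{p-1} f(s,u(s)) ds − (t/T)^p ∫₀^T (T-s)^{p-1} f(s,u(s)) ds] on [0,T]. Define Δ(χ₁) := (α₂ − α₁ − χ₁T)Γ(p+1)/T^p − (p/T^p)∫₀^T (T-s)^{p-1} f(s,u(s)) ds. Then u also solves the perturbed Volterra integral equation u(t) = α₁ + χ₁ t + (1/Γ(p))∫₀^t (t-s)^{p-1}[f(s,u(s)) + Δ(χ₁)] ds, i.e., it solves the Caputo initial value problem C_0D^p_t u = f(t,u) + Δ(χ₁), u(0) = α₁, u'(0) = χ₁. -/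

import Mathlib

/-!
With `I_T := ∫₀^T (T-s)^{p-1} f(s,u(s)) ds`, the constant `Δ` is chosen so that
`t^p Δ / Γ(p+1) = (α₂ - α₁ - χ₁T)(t/T)^p - (t/T)^p I_T / Γ(p)`. Since
`∫₀^t (t-s)^{p-1} ds = t^p / p` and `p Γ(p) = Γ(p+1)`, adding `Δ` under the Riemann–Liouville
integral contributes exactly this term, which is the part of the boundary-value representation
of `u` that is not a Volterra integral.
-/

open Real intervalIntegral

lemma integral_sub_rpow (t : ℝ) {r : ℝ} (hr : -1 < r) :
    ∫ s in (0 : ℝ)..t, (t - s) ^ r = t ^ (r + 1) / (r + 1) := by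
  rw [intervalIntegral.integral_comp_sub_left (fun s : ℝ => s ^ r) t, sub_zero, sub_self,
    integral_rpow (Or.inl hr), zero_rpow (by linarith : r + 1 ≠ 0), sub_zero]

lemma integral_sub_rpow_mul_add_const {p t c : ℝ} {g : ℝ → ℝ} (hp : 0 < p)
    (hg : IntervalIntegrable (fun s => (t - s) ^ (p - 1) * g s) MeasureTheory.volume 0 t) :
    ∫ s in (0 : ℝ)..t, (t - s) ^ (p - 1) * (g s + c) =
      (∫ s in (0 : ℝ)..t, (t - s) ^ (p - 1) * g s) + c * (t ^ p / p) := by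
  have hconst : IntervalIntegrable (fun s => (t - s) ^ (p - 1) * c) MeasureTheory.volume 0 t :=
    have h := (intervalIntegral.intervalIntegrable_rpow' (a := t) (b := 0)
      (by linarith : -1 < p - 1)).comp_sub_left t
    (by simpa using h : IntervalIntegrable _ _ 0 t).mul_const c
  simp_rw [mul_add]
  rw [intervalIntegral.integral_add hg hconst, intervalIntegral.integral_mul_const,
    integral_sub_rpow t (by linarith : -1 < p - 1), sub_add_cancel, mul_comm]

lemma intervalIntegrable_sub_rpow_mul {p t T : ℝ} {g : ℝ → ℝ} (hp : 1 ≤ p) (ht : t ∈ Set.Icc 0 T)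
    (hg : ContinuousOn g (Set.Icc 0 T)) :
    IntervalIntegrable (fun s => (t - s) ^ (p - 1) * g s) MeasureTheory.volume 0 t := by
  refine ContinuousOn.intervalIntegrable (ContinuousOn.mul ?_ (hg.mono ?_))
  · exact (continuous_const.sub continuous_id).continuousOn.rpow_const
      fun _ _ => Or.inr (by linarith)
  · rw [Set.uIcc_of_le ht.1]
    exact Set.Icc_subset_Icc le_rfl ht.2

lemma one_div_gamma_mul_boundary_shift {p T t : ℝ} (hp : 0 < p) (hT : 0 < T) (ht : 0 ≤ t)
    (A I : ℝ) :
    1 / Gamma p * ((A * Gamma (p + 1) / T ^ p - p / T ^ p * I) * (t ^ p / p)) =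
      A * (t / T) ^ p - 1 / Gamma p * ((t / T) ^ p * I) := by
  have hΓ : Gamma p ≠ 0 := (Gamma_pos_of_pos hp).ne'
  have hTp : T ^ p ≠ 0 := (rpow_pos_of_pos hT p).ne'
  rw [Gamma_add_one hp.ne', div_rpow ht hT.le]
  field_simp

theorem stmt8_general (n : ℕ) (p T : ℝ) (hp1 : 1 < p) (hT : 0 < T)
    (α₁ α₂ χ₁ : Fin n → ℝ)
    (f : ℝ → (Fin n → ℝ) → (Fin n → ℝ))
    (hf : Continuous (fun q : ℝ × (Fin n → ℝ) => f q.1 q.2))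
    (u : ℝ → (Fin n → ℝ)) (hu : ContinuousOn u (Set.Icc 0 T))
    (heq : ∀ t ∈ Set.Icc 0 T, u t = fun i =>
      α₁ i + χ₁ i * t + (α₂ i - α₁ i - χ₁ i * T) * (t / T) ^ p +
        (1 / Real.Gamma p) *
          ((∫ s in (0 : ℝ)..t, (t - s) ^ (p - 1) * f s (u s) i) -
            (t / T) ^ p * ∫ s in (0 : ℝ)..T, (T - s) ^ (p - 1) * f s (u s) i))
    (Δ : Fin n → ℝ)
    (hΔ : Δ = fun i =>
      (α₂ i - α₁ i - χ₁ i * T) * Real.Gamma (p + 1) / T ^ p -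
        (p / T ^ p) * ∫ s in (0 : ℝ)..T, (T - s) ^ (p - 1) * f s (u s) i) :
    ∀ t ∈ Set.Icc 0 T, u t = fun i =>
      α₁ i + χ₁ i * t +
        (1 / Real.Gamma p) *
          ∫ s in (0 : ℝ)..t, (t - s) ^ (p - 1) * (f s (u s) i + Δ i) := by
  intro t ht
  have hp : 0 < p := one_pos.trans hp1
  have hfu : ∀ i, ContinuousOn (fun s => f s (u s) i) (Set.Icc 0 T) := fun i =>
    (continuous_apply i).comp_continuousOn (hf.comp_continuousOn (continuousOn_id.prodMk hu))
  funext i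
  rw [heq t ht, hΔ, integral_sub_rpow_mul_add_const hp
    (intervalIntegrable_sub_rpow_mul hp1.le ht (hfu i)), mul_add,
    one_div_gamma_mul_boundary_shift hp hT ht.1]
  ring

theorem stmt8 (n : ℕ) (p T : ℝ) (hp1 : 1 < p) (hp2 : p ≤ 2) (hT : 0 < T)
    (α₁ α₂ χ₁ : Fin n → ℝ)
    (f : ℝ → (Fin n → ℝ) → (Fin n → ℝ))
    (hf : Continuous (fun q : ℝ × (Fin n → ℝ) => f q.1 q.2))
    (u : ℝ → (Fin n → ℝ)) (hu : ContinuousOn u (Set.Icc 0 T))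
    (heq : ∀ t ∈ Set.Icc 0 T, u t = fun i =>
      α₁ i + χ₁ i * t + (α₂ i - α₁ i - χ₁ i * T) * (t / T) ^ p +
        (1 / Real.Gamma p) *
          ((∫ s in (0 : ℝ)..t, (t - s) ^ (p - 1) * f s (u s) i) -
            (t / T) ^ p * ∫ s in (0 : ℝ)..T, (T - s) ^ (p - 1) * f s (u s) i))
    (Δ : Fin n → ℝ)
    (hΔ : Δ = fun i =>
      (α₂ i - α₁ i - χ₁ i * T) * Real.Gamma (p + 1) / T ^ p -
        (p / T ^ p) * ∫ s in (0 : ℝ)..T, (T - s) ^ (p - 1) * f s (u s) i) :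
    ∀ t ∈ Set.Icc 0 T, u t = fun i =>
      α₁ i + χ₁ i * t +
        (1 / Real.Gamma p) *
          ∫ s in (0 : ℝ)..t, (t - s) ^ (p - 1) * (f s (u s) i + Δ i) :=
  stmt8_general n p T hp1 hT α₁ α₂ χ₁ f hf u hu heq Δ hΔ
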